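/- If D is a sharp domain in which every t-ideal is a v-ideal (a TV domain), then D is a Dedekind domain. -/

import Mathlib

/-!
In a sharp domain, factoring a principal ideal `(c) ⊇ I · (c I⁻¹)` with `0 ≠ c ∈ I` exhibits the
`v`-closure of every nonzero ideal `I` as one of the factors, so it is invertible. If `P`, `Q` are
invertible integral ideals with `(P + Q)⁻¹ = R`, sharpness applied to `P² + Q ⊇ P · P` gives
`Q ⊆ (P + Q)²`, so the finitely generated ideal `P + Q` is idempotent, hence equal to `R`. Taking
`P = T W_v⁻¹` and `Q = N W_v⁻¹` for `W = T + N` shows `W = W_v`, so finitely generated ideals are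
invertible by induction. Then every ideal is a `t`-ideal, by the TV property a `v`-ideal, and hence
invertible.
-/

/-- A domain `R` is *sharp* if whenever `I ⊇ A*B` with `I, A, B` nonzero ideals,
there exist ideals `A' ⊇ A` and `B' ⊇ B` such that `I = A'*B'`. -/
def IsSharpDomain (R : Type*) [CommRing R] : Prop :=
  ∀ I A B : Ideal R, I ≠ ⊥ → A ≠ ⊥ → B ≠ ⊥ → A * B ≤ I →
    ∃ A' B' : Ideal R, A ≤ A' ∧ B ≤ B' ∧ I = A' * B'

/-- The `t`-closure of an ideal `I`: the union of the `v`-closures `(J⁻¹)⁻¹` of the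
nonzero finitely generated subideals `J` of `I`, as a submodule of the fraction field. -/
noncomputable def tClosure (R : Type*) [CommRing R] [IsDomain R] (I : Ideal R) :
    Submodule R (FractionRing R) :=
  ⨆ J ∈ {J : Ideal R | J.FG ∧ J ≠ ⊥ ∧ J ≤ I},
    (((((J : Ideal R) : FractionalIdeal (nonZeroDivisors R) (FractionRing R))⁻¹)⁻¹ :
      FractionalIdeal (nonZeroDivisors R) (FractionRing R)) : Submodule R (FractionRing R))

open scoped nonZeroDivisors

namespace FractionalIdeal

variable {R K : Type*} [CommRing R] [IsDomain R] [Field K] [Algebra R K] [IsFractionRing R K]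
  {I J U : FractionalIdeal R⁰ K}

lemma le_inv_iff_mul_le_one (hI : I ≠ 0) : J ≤ I⁻¹ ↔ J * I ≤ 1 := by
  rw [inv_eq, le_div_iff_mul_le hI]

lemma mul_inv_le_one : I * I⁻¹ ≤ 1 :=
  mul_one_div_le_one

lemma inv_mul_le_one : I⁻¹ * I ≤ 1 :=
  mul_comm I I⁻¹ ▸ mul_inv_le_one

lemma inv_ne_zero_of_ne_zero (hI : I ≠ 0) : I⁻¹ ≠ 0 :=
  right_ne_zero_of_mul (bot_lt_mul_inv hI).ne'

lemma le_inv_inv (hI : I ≠ 0) : I ≤ I⁻¹⁻¹ := by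
  rw [le_inv_iff_mul_le_one (inv_ne_zero_of_ne_zero hI)]
  exact mul_inv_le_one

lemma inv_inf_inv_le_inv_add (hI : I ≠ 0) : I⁻¹ ⊓ J⁻¹ ≤ (I + J)⁻¹ := by
  have hIJ : I + J ≠ 0 := ne_bot_of_le_ne_bot hI (le_add_right le_rfl)
  rw [le_inv_iff_mul_le_one hIJ, mul_add, ← sup_eq_add]
  exact sup_le ((mul_left_mono inf_le_left).trans inv_mul_le_one)
    ((mul_left_mono inf_le_right).trans inv_mul_le_one)

lemma mul_inv_cancel_of_isUnit (hU : IsUnit U) : U * U⁻¹ = 1 :=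
  (mul_inv_cancel_iff_isUnit K).mpr hU

lemma inv_mul_cancel_of_isUnit (hU : IsUnit U) : U⁻¹ * U = 1 := by
  rw [mul_comm, mul_inv_cancel_of_isUnit hU]

lemma isUnit_inv (hU : IsUnit U) : IsUnit U⁻¹ :=
  .of_mul_eq_one U (inv_mul_cancel_of_isUnit hU)

lemma inv_inv_of_isUnit (hU : IsUnit U) : U⁻¹⁻¹ = U :=
  (right_inverse_eq K U⁻¹ U (inv_mul_cancel_of_isUnit hU)).symm

lemma le_inv_mul_iff_of_isUnit (hU : IsUnit U) : I ≤ U⁻¹ * J ↔ U * I ≤ J := by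
  constructor
  · intro h
    calc U * I ≤ U * (U⁻¹ * J) := mul_right_mono h
      _ = J := by rw [← mul_assoc, mul_inv_cancel_of_isUnit hU, one_mul]
  · intro h
    calc I = U⁻¹ * (U * I) := by rw [← mul_assoc, inv_mul_cancel_of_isUnit hU, one_mul]
      _ ≤ U⁻¹ * J := mul_right_mono h

lemma mul_inv_of_isUnit (hU : IsUnit U) : (U * I)⁻¹ = U⁻¹ * I⁻¹ := by
  obtain rfl | hI := eq_or_ne I 0
  · rw [mul_zero, inv_zero', mul_zero]
  have hUI : U * I ≠ 0 := hU.mul_right_eq_zero.not.mpr hI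
  apply le_antisymm
  · rw [le_inv_mul_iff_of_isUnit hU, le_inv_iff_mul_le_one hI, mul_comm U, mul_assoc]
    exact inv_mul_le_one
  · rw [le_inv_iff_mul_le_one hUI, mul_mul_mul_comm, inv_mul_cancel_of_isUnit hU, one_mul]
    exact inv_mul_le_one

lemma inv_inv_le_of_le_of_isUnit (hI : I ≠ 0) (hU : IsUnit U) (hIU : I ≤ U) : I⁻¹⁻¹ ≤ U := by
  rw [← inv_inv_of_isUnit hU]
  exact inv_anti_mono (inv_ne_zero_of_ne_zero hU.ne_zero) (inv_ne_zero_of_ne_zero hI)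
    (inv_anti_mono hI hU.ne_zero hIU)

lemma isUnit_spanSingleton {x : K} (hx : x ≠ 0) : IsUnit (spanSingleton R⁰ x) :=
  .of_mul_eq_one _ (spanSingleton_mul_inv K hx)

lemma mul_inv_inf_one_le (hI : I ≠ 0) (hU : IsUnit U) (hIU : (I + U)⁻¹ ≤ 1) :
    U * I⁻¹ ⊓ 1 ≤ U := by
  have key : (U * I⁻¹ ⊓ 1) * U⁻¹ ≤ 1 := calc
    (U * I⁻¹ ⊓ 1) * U⁻¹ ≤ I⁻¹ ⊓ U⁻¹ := by
        refine le_inf ?_ ?_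
        · calc (U * I⁻¹ ⊓ 1) * U⁻¹ ≤ U * I⁻¹ * U⁻¹ := by gcongr; exact inf_le_left
            _ = I⁻¹ := by rw [mul_right_comm, mul_inv_cancel_of_isUnit hU, one_mul]
        · calc (U * I⁻¹ ⊓ 1) * U⁻¹ ≤ 1 * U⁻¹ := by gcongr; exact inf_le_right
            _ = U⁻¹ := one_mul _
    _ ≤ (I + U)⁻¹ := inv_inf_inv_le_inv_add hI
    _ ≤ 1 := hIU
  calc U * I⁻¹ ⊓ 1 = (U * I⁻¹ ⊓ 1) * U⁻¹ * U := by
        rw [mul_assoc, inv_mul_cancel_of_isUnit hU, mul_one]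
    _ ≤ 1 * U := by gcongr
    _ = U := one_mul U

lemma le_add_of_mul_le_mul_add {P Q X : FractionalIdeal R⁰ K} (hP : IsUnit P) (hP1 : P ≤ 1)
    (hQ : IsUnit Q) (hPQ : (P + Q)⁻¹ ≤ 1) (hX1 : X ≤ 1) (hXP : X * P ≤ P * P + Q) :
    X ≤ P + Q := by
  have hX : X ≤ P ⊔ Q * P⁻¹ := calc
    X = X * P * P⁻¹ := by rw [mul_assoc, mul_inv_cancel_of_isUnit hP, mul_one]
    _ ≤ (P * P + Q) * P⁻¹ := by gcongr
    _ = P ⊔ Q * P⁻¹ := by rw [add_mul, mul_assoc, mul_inv_cancel_of_isUnit hP, mul_one, sup_eq_add]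
  have modular : (P ⊔ Q * P⁻¹) ⊓ 1 ≤ P ⊔ (Q * P⁻¹ ⊓ 1) := by
    simpa only [← coe_le_coe, coe_inf, coe_sup] using
      sup_inf_le_assoc_of_le ((Q * P⁻¹ : FractionalIdeal R⁰ K) : Submodule R K) (coe_le_coe.mpr hP1)
  calc X ≤ (P ⊔ Q * P⁻¹) ⊓ 1 := le_inf hX hX1
    _ ≤ P ⊔ (Q * P⁻¹ ⊓ 1) := modular
    _ ≤ P ⊔ Q := sup_le_sup_left (mul_inv_inf_one_le hP.ne_zero hQ hPQ) P
    _ = P + Q := sup_eq_add P Q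

lemma isUnit_coeIdeal_span_singleton {c : R} (hc : c ≠ 0) :
    IsUnit ((Ideal.span {c} : Ideal R) : FractionalIdeal R⁰ K) := by
  rw [coeIdeal_span_singleton]
  exact isUnit_spanSingleton ((map_ne_zero_iff _ (IsFractionRing.injective R K)).mpr hc)

end FractionalIdeal

open FractionalIdeal

namespace IsSharpDomain

variable {R K : Type*} [CommRing R] [IsDomain R] [Field K] [Algebra R K] [IsFractionRing R K]

theorem isUnit_inv_inv (h : IsSharpDomain R) {I : Ideal R} (hI : I ≠ ⊥) :
    IsUnit ((I : FractionalIdeal R⁰ K)⁻¹⁻¹) := by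
  obtain ⟨c, hcI, hc0⟩ := Submodule.exists_mem_ne_zero_of_ne_bot hI
  set C := Ideal.span {c}
  have hC : IsUnit (C : FractionalIdeal R⁰ K) := isUnit_coeIdeal_span_singleton hc0
  have hCI : (C : FractionalIdeal R⁰ K) ≤ I :=
    (coeIdeal_le_coeIdeal K).mpr ((Ideal.span_singleton_le_iff_mem I).mpr hcI)
  have hI0 : (I : FractionalIdeal R⁰ K) ≠ 0 := coeIdeal_ne_zero.mpr hI
  obtain ⟨B, hB⟩ : ∃ B : Ideal R, (B : FractionalIdeal R⁰ K) = C * (I : FractionalIdeal R⁰ K)⁻¹ :=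
    le_one_iff_exists_coeIdeal.mp <| (mul_left_mono hCI).trans FractionalIdeal.mul_inv_le_one
  have hB0 : (B : FractionalIdeal R⁰ K) ≠ 0 :=
    hB ▸ hC.mul_right_eq_zero.not.mpr (inv_ne_zero_of_ne_zero hI0)
  have hIB : I * B ≤ C := by
    rw [← coeIdeal_le_coeIdeal K, coeIdeal_mul, hB, mul_left_comm]
    exact (mul_right_mono FractionalIdeal.mul_inv_le_one).trans (mul_one _).le
  obtain ⟨A', B', hIA', hBB', hfac⟩ :=
    h C I B (coeIdeal_ne_zero.mp hC.ne_zero) hI (coeIdeal_ne_zero.mp hB0) hIB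
  have hA'B' : (A' : FractionalIdeal R⁰ K) * B' = C := by rw [← coeIdeal_mul, ← hfac]
  have hA' : IsUnit (A' : FractionalIdeal R⁰ K) := isUnit_of_mul_isUnit_left (hA'B' ▸ hC)
  have hB' : IsUnit (B' : FractionalIdeal R⁰ K) := isUnit_of_mul_isUnit_right (hA'B' ▸ hC)
  suffices (I : FractionalIdeal R⁰ K)⁻¹⁻¹ = A' from this ▸ hA'
  refine le_antisymm (inv_inv_le_of_le_of_isUnit hI0 hA' ((coeIdeal_le_coeIdeal K).mpr hIA')) ?_
  have hB'inv : (B' : FractionalIdeal R⁰ K)⁻¹ ≤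
      (C : FractionalIdeal R⁰ K)⁻¹ * (I : FractionalIdeal R⁰ K)⁻¹⁻¹ := by
    rw [← mul_inv_of_isUnit hC, ← hB]
    exact inv_anti_mono hB0 hB'.ne_zero ((coeIdeal_le_coeIdeal K).mpr hBB')
  calc (A' : FractionalIdeal R⁰ K) = C * (B' : FractionalIdeal R⁰ K)⁻¹ := by
        rw [← hA'B', mul_assoc, mul_inv_cancel_of_isUnit hB', mul_one]
    _ ≤ (I : FractionalIdeal R⁰ K)⁻¹⁻¹ := (le_inv_mul_iff_of_isUnit hC).mp hB'inv

theorem le_sup_mul_sup (h : IsSharpDomain R) {P Q : Ideal R}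
    (hP : IsUnit (P : FractionalIdeal R⁰ K)) (hQ : IsUnit (Q : FractionalIdeal R⁰ K))
    (hPQ : ((P ⊔ Q : Ideal R) : FractionalIdeal R⁰ K)⁻¹ ≤ 1) :
    Q ≤ (P ⊔ Q) * (P ⊔ Q) := by
  have hP0 : P ≠ ⊥ := coeIdeal_ne_zero.mp hP.ne_zero
  have hQ0 : Q ≠ ⊥ := coeIdeal_ne_zero.mp hQ.ne_zero
  obtain ⟨A, B, hPA, hPB, hAB⟩ :=
    h (P * P ⊔ Q) P P (ne_bot_of_le_ne_bot hQ0 le_sup_right) hP0 hP0 le_sup_left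
  have bound {X Y : Ideal R} (hPY : P ≤ Y) (hXY : X * Y = P * P ⊔ Q) : X ≤ P ⊔ Q := by
    rw [← coeIdeal_le_coeIdeal K, coeIdeal_sup]
    refine le_add_of_mul_le_mul_add hP coeIdeal_le_one hQ ?_ coeIdeal_le_one ?_
    · rwa [← coeIdeal_sup]
    rw [← coeIdeal_mul, ← coeIdeal_mul, ← coeIdeal_sup, ← hXY, coeIdeal_le_coeIdeal]
    exact Ideal.mul_mono_right hPY
  calc Q ≤ P * P ⊔ Q := le_sup_right
    _ = A * B := hAB
    _ ≤ (P ⊔ Q) * (P ⊔ Q) :=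
      Ideal.mul_mono (bound hPB hAB.symm) (bound hPA (mul_comm B A ▸ hAB.symm))

theorem sup_eq_top (h : IsSharpDomain R) {P Q : Ideal R}
    (hP : IsUnit (P : FractionalIdeal R⁰ K)) (hQ : IsUnit (Q : FractionalIdeal R⁰ K))
    (hPQ : ((P ⊔ Q : Ideal R) : FractionalIdeal R⁰ K)⁻¹ ≤ 1) : P ⊔ Q = ⊤ := by
  have hQP : ((Q ⊔ P : Ideal R) : FractionalIdeal R⁰ K)⁻¹ ≤ 1 := sup_comm P Q ▸ hPQ
  have hidem : IsIdempotentElem (P ⊔ Q) := le_antisymm Ideal.mul_le_left <|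
    sup_le (sup_comm Q P ▸ h.le_sup_mul_sup hQ hP hQP) (h.le_sup_mul_sup hP hQ hPQ)
  have hfg : (P ⊔ Q).FG := Submodule.FG.sup (Ideal.fg_of_isUnit (IsFractionRing.injective R K) P hP)
    (Ideal.fg_of_isUnit (IsFractionRing.injective R K) Q hQ)
  refine ((Ideal.isIdempotentElem_iff_eq_bot_or_top _ hfg).mp hidem).resolve_left fun hbot => ?_
  exact hP.ne_zero (coeIdeal_eq_zero.mpr (eq_bot_iff.mpr (hbot ▸ le_sup_left)))

theorem isUnit_sup (h : IsSharpDomain R) {T N : Ideal R}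
    (hT : IsUnit (T : FractionalIdeal R⁰ K)) (hN : IsUnit (N : FractionalIdeal R⁰ K)) :
    IsUnit ((T ⊔ N : Ideal R) : FractionalIdeal R⁰ K) := by
  set W := T ⊔ N
  have hW0 : W ≠ ⊥ := ne_bot_of_le_ne_bot (coeIdeal_ne_zero.mp hT.ne_zero) le_sup_left
  set U := (W : FractionalIdeal R⁰ K)⁻¹⁻¹
  have hU : IsUnit U := h.isUnit_inv_inv hW0
  have hWU : (W : FractionalIdeal R⁰ K) ≤ U := le_inv_inv (coeIdeal_ne_zero.mpr hW0)
  have integral {X : Ideal R} (hX : X ≤ W) : ∃ Y : Ideal R, (Y : FractionalIdeal R⁰ K) = U⁻¹ * X :=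
    le_one_iff_exists_coeIdeal.mp <| calc
      U⁻¹ * X ≤ U⁻¹ * U := by gcongr; exact ((coeIdeal_le_coeIdeal K).mpr hX).trans hWU
      _ = 1 := inv_mul_cancel_of_isUnit hU
  obtain ⟨P, hP⟩ := integral (le_sup_left : T ≤ W)
  obtain ⟨Q, hQ⟩ := integral (le_sup_right : N ≤ W)
  have hPQ : ((P ⊔ Q : Ideal R) : FractionalIdeal R⁰ K) = U⁻¹ * W := by
    rw [coeIdeal_sup, hP, hQ, ← mul_add, ← coeIdeal_sup]
  have hPQinv : ((P ⊔ Q : Ideal R) : FractionalIdeal R⁰ K)⁻¹ ≤ 1 := by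
    rw [hPQ, mul_inv_of_isUnit (isUnit_inv hU), inv_inv_of_isUnit hU]
    exact FractionalIdeal.inv_mul_le_one
  have htop := h.sup_eq_top (hP ▸ (isUnit_inv hU).mul hT) (hQ ▸ (isUnit_inv hU).mul hN) hPQinv
  rw [htop, coeIdeal_top] at hPQ
  have hW : (W : FractionalIdeal R⁰ K) = U := by
    rw [← one_mul (W : FractionalIdeal R⁰ K), ← mul_inv_cancel_of_isUnit hU, mul_assoc, ← hPQ,
      mul_one]
  exact hW ▸ hU

theorem isUnit_of_fg (h : IsSharpDomain R) {I : Ideal R} (hfg : I.FG) (hI : I ≠ ⊥) :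
    IsUnit (I : FractionalIdeal R⁰ K) := by
  suffices I = ⊥ ∨ IsUnit (I : FractionalIdeal R⁰ K) from this.resolve_left hI
  clear hI
  induction I, hfg using Submodule.fg_induction with
  | singleton x =>
    obtain rfl | hx := eq_or_ne x 0
    · left; simp
    · exact Or.inr (isUnit_coeIdeal_span_singleton hx)
  | sup T N _ _ hT hN =>
    rcases hT with rfl | hT
    · simpa using hN
    rcases hN with rfl | hN
    · simpa using Or.inr hT
    exact Or.inr (h.isUnit_sup hT hN)

end IsSharpDomain

theorem tClosure_eq_of_isUnit_of_fg {R : Type*} [CommRing R] [IsDomain R]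
    (hfg : ∀ J : Ideal R, J.FG → J ≠ ⊥ → IsUnit (J : FractionalIdeal R⁰ (FractionRing R)))
    (I : Ideal R) :
    tClosure R I = ((I : FractionalIdeal R⁰ (FractionRing R)) : Submodule R (FractionRing R)) := by
  have hv {J : Ideal R} (hJ : J.FG) (hJ0 : J ≠ ⊥) :
      (J : FractionalIdeal R⁰ (FractionRing R))⁻¹⁻¹ = J :=
    inv_inv_of_isUnit (hfg J hJ hJ0)
  apply le_antisymm
  · refine iSup₂_le fun J ⟨hJ, hJ0, hJI⟩ => ?_
    rw [hv hJ hJ0]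
    exact coe_le_coe.mpr ((coeIdeal_le_coeIdeal _).mpr hJI)
  · intro x hx
    obtain ⟨i, hi, rfl⟩ := (mem_coeIdeal _).mp hx
    obtain rfl | hi0 := eq_or_ne i 0
    · rw [map_zero]; exact zero_mem _
    have hspan : (Ideal.span {i}).FG := Submodule.fg_span_singleton i
    have hspan0 : Ideal.span {i} ≠ ⊥ := by rwa [Ne, Ideal.span_singleton_eq_bot]
    refine Submodule.mem_iSup_of_mem (Ideal.span {i}) (Submodule.mem_iSup_of_mem
      ⟨hspan, hspan0, (Ideal.span_singleton_le_iff_mem I).mpr hi⟩ ?_)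
    rw [hv hspan hspan0]
    exact mem_coeIdeal_of_mem _ (Ideal.mem_span_singleton_self i)

theorem isDedekindDomain_of_isUnit_coeIdeal {R K : Type*} [CommRing R] [IsDomain R] [Field K]
    [Algebra R K] [IsFractionRing R K]
    (h : ∀ I : Ideal R, I ≠ ⊥ → IsUnit (I : FractionalIdeal R⁰ K)) : IsDedekindDomain R := by
  refine (isDedekindDomain_iff_mul_inv_cancel (K := K)).mpr fun J hJ => ?_
  obtain ⟨a, I, ha, rfl⟩ := exists_eq_spanSingleton_mul J
  have hI : I ≠ ⊥ := by
    rintro rfl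
    simp at hJ
  rw [mul_inv_cancel_iff_isUnit]
  exact (isUnit_spanSingleton (inv_ne_zero
    ((map_ne_zero_iff _ (IsFractionRing.injective R K)).mpr ha))).mul (h I hI)

/-- A sharp TV domain (every `t`-ideal is a `v`-ideal) is a Dedekind domain. -/
theorem sharp_TV_dedekind (R : Type*) [CommRing R] [IsDomain R]
    (h : IsSharpDomain R)
    (hTV : ∀ I : Ideal R, I ≠ ⊥ →
      tClosure R I =
        ((I : FractionalIdeal (nonZeroDivisors R) (FractionRing R)) :
          Submodule R (FractionRing R)) →
      ((I : FractionalIdeal (nonZeroDivisors R) (FractionRing R))⁻¹)⁻¹ = I) :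
    IsDedekindDomain R := by
  refine isDedekindDomain_of_isUnit_coeIdeal (K := FractionRing R) fun I hI => ?_
  have htI := tClosure_eq_of_isUnit_of_fg (fun J hJ hJ0 => h.isUnit_of_fg hJ hJ0) I
  rw [← hTV I hI htI]
  exact h.isUnit_inv_inv hI
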